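/- Computable inexactness bound for QPPAL Phase II (Proposition 3.3). In the QP dual setting with Q ≠ 0, let λ_+(Q) > 0 denote the smallest positive eigenvalue of Q, fix τ_k, σ_k > 0, Λ_k := Diag(τ_k Q, τ_k I_m, I_n), and let P_k := (Λ_k + σ_k T_l̃)^{−1} Λ_k be the (single-valued, nonexpansive in the Λ_k-norm) proximal map on W × ℝ^m × ℝ^n. Given iterates (w^k, y^k, x^k) ∈ W × ℝ^m × ℝ^n and any (w^{k+1}, y^{k+1}) ∈ W × ℝ^m, define x^{k+1} := Π_C(x^k + σ_k(−Qw^{k+1} + A*y^{k+1} − c)). Then ‖(w^{k+1}, y^{k+1}, x^{k+1}) − P_k(w^k, y^k, x^k)‖_{Λ_k} ≤ (σ_k / min{1, √τ_k, √(τ_k λ_+(Q))}) · ‖∇Ψ_k(w^{k+1}, y^{k+1})‖, where ∇Ψ_k(w, y) = (Qw − QΠ_C(x^k − σ_k(Qw − A*y + c)) + (τ_k/σ_k)Q(w − w^k), −b + AΠ_C(x^k − σ_k(Qw − A*y + c)) + (τ_k/σ_k)(y − y^k)). -/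

import Mathlib

open RealInnerProductSpace Matrix

noncomputable section

/-- The box `C = {x ∈ ℝⁿ : l ≤ x ≤ u}` with extended-real bounds. -/
def boxSet {n : ℕ} (l u : Fin n → EReal) : Set (EuclideanSpace ℝ (Fin n)) :=
  {x | ∀ i, l i ≤ (x i : EReal) ∧ (x i : EReal) ≤ u i}

/-- The normal cone of a convex set `C` at `x`. -/
def normalCone {n : ℕ} (C : Set (EuclideanSpace ℝ (Fin n))) (x : EuclideanSpace ℝ (Fin n)) :
    Set (EuclideanSpace ℝ (Fin n)) :=
  {ζ | x ∈ C ∧ ∀ s ∈ C, ⟪ζ, s - x⟫ ≤ 0}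

/-- The maximal monotone operator `T_l̃`:
`T_l̃(w, y, x) = {(Q(w − x), −b + Ax, x′) : x′ ∈ Qw − A*y + c + N_C(x)}`. -/
def TlOp {n m : ℕ} (Q : Matrix (Fin n) (Fin n) ℝ) (A : Matrix (Fin m) (Fin n) ℝ)
    (b : EuclideanSpace ℝ (Fin m)) (c : EuclideanSpace ℝ (Fin n))
    (C : Set (EuclideanSpace ℝ (Fin n)))
    (u : EuclideanSpace ℝ (Fin n) × EuclideanSpace ℝ (Fin m) × EuclideanSpace ℝ (Fin n)) :
    Set (EuclideanSpace ℝ (Fin n) × EuclideanSpace ℝ (Fin m) × EuclideanSpace ℝ (Fin n)) :=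
  {t | t.1 = Matrix.toEuclideanLin Q (u.1 - u.2.2) ∧
    t.2.1 = Matrix.toEuclideanLin A u.2.2 - b ∧
    ∃ ζ ∈ normalCone C u.2.2,
      t.2.2 = Matrix.toEuclideanLin Q u.1 - Matrix.toEuclideanLin Aᵀ u.2.1 + c + ζ}

/-- The block diagonal operator `Λ = Diag(τQ, τI_m, I_n)` applied to a triple. -/
def LamOp {n m : ℕ} (Q : Matrix (Fin n) (Fin n) ℝ) (τ : ℝ)
    (u : EuclideanSpace ℝ (Fin n) × EuclideanSpace ℝ (Fin m) × EuclideanSpace ℝ (Fin n)) :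
    EuclideanSpace ℝ (Fin n) × EuclideanSpace ℝ (Fin m) × EuclideanSpace ℝ (Fin n) :=
  (τ • Matrix.toEuclideanLin Q u.1, τ • u.2.1, u.2.2)

/-- The seminorm `‖u‖_Λ = √(τ⟨w, Qw⟩ + τ‖y‖² + ‖x‖²)` induced by `Λ = Diag(τQ, τI_m, I_n)`. -/
def LamNorm {n m : ℕ} (Q : Matrix (Fin n) (Fin n) ℝ) (τ : ℝ)
    (u : EuclideanSpace ℝ (Fin n) × EuclideanSpace ℝ (Fin m) × EuclideanSpace ℝ (Fin n)) : ℝ :=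
  Real.sqrt (τ * ⟪u.1, Matrix.toEuclideanLin Q u.1⟫ + τ * ‖u.2.1‖ ^ 2 + ‖u.2.2‖ ^ 2)

/-- The gradient `∇Ψ_k(w, y)` of the Phase II inner objective. -/
def gradPsi {n m : ℕ} (Q : Matrix (Fin n) (Fin n) ℝ) (A : Matrix (Fin m) (Fin n) ℝ)
    (b : EuclideanSpace ℝ (Fin m)) (c : EuclideanSpace ℝ (Fin n))
    (projC : EuclideanSpace ℝ (Fin n) → EuclideanSpace ℝ (Fin n)) (τ σ : ℝ)
    (wk : EuclideanSpace ℝ (Fin n)) (yk : EuclideanSpace ℝ (Fin m))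
    (xk : EuclideanSpace ℝ (Fin n))
    (w : EuclideanSpace ℝ (Fin n)) (y : EuclideanSpace ℝ (Fin m)) :
    EuclideanSpace ℝ (Fin n) × EuclideanSpace ℝ (Fin m) :=
  (Matrix.toEuclideanLin Q w -
      Matrix.toEuclideanLin Q (projC (xk - σ •
        (Matrix.toEuclideanLin Q w - Matrix.toEuclideanLin Aᵀ y + c))) +
      (τ / σ) • Matrix.toEuclideanLin Q (w - wk),
    -b + Matrix.toEuclideanLin A (projC (xk - σ •
        (Matrix.toEuclideanLin Q w - Matrix.toEuclideanLin Aᵀ y + c))) +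
      (τ / σ) • (y - yk))



lemma boxSet_convex {n : ℕ} (l u : Fin n → EReal) : Convex ℝ (boxSet l u) := by
  intro x hx y hy a b ha hb hab
  intro i
  have hx' := hx i
  have hy' := hy i
  have hcoord : (a • x + b • y) i = a * x i + b * y i := by
    simp [PiLp.add_apply, PiLp.smul_apply, smul_eq_mul]
  constructor
  · have h1 : min (x i) (y i) ≤ a * x i + b * y i := by
      have e1 : a * min (x i) (y i) + b * min (x i) (y i) = min (x i) (y i) := by
        rw [← add_mul, hab, one_mul]
      have := mul_le_mul_of_nonneg_left (min_le_left (x i) (y i)) ha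
      have := mul_le_mul_of_nonneg_left (min_le_right (x i) (y i)) hb
      linarith
    have h2 : l i ≤ ((min (x i) (y i) : ℝ) : EReal) := by
      rcases min_choice (x i) (y i) with h | h <;> rw [h]
      · exact hx'.1
      · exact hy'.1
    calc l i ≤ ((min (x i) (y i) : ℝ) : EReal) := h2
      _ ≤ ((a * x i + b * y i : ℝ) : EReal) := by exact_mod_cast h1
      _ = ((a • x + b • y) i : EReal) := by rw [hcoord]
  · have h1 : a * x i + b * y i ≤ max (x i) (y i) := by
      have e1 : a * max (x i) (y i) + b * max (x i) (y i) = max (x i) (y i) := by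
        rw [← add_mul, hab, one_mul]
      have := mul_le_mul_of_nonneg_left (le_max_left (x i) (y i)) ha
      have := mul_le_mul_of_nonneg_left (le_max_right (x i) (y i)) hb
      linarith
    have h2 : ((max (x i) (y i) : ℝ) : EReal) ≤ u i := by
      rcases max_choice (x i) (y i) with h | h <;> rw [h]
      · exact hx'.2
      · exact hy'.2
    calc ((a • x + b • y) i : EReal) = ((a * x i + b * y i : ℝ) : EReal) := by rw [hcoord]
      _ ≤ ((max (x i) (y i) : ℝ) : EReal) := by exact_mod_cast h1
      _ ≤ u i := h2

/-- Variational inequality for a metric projection onto a convex set. -/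
lemma proj_vi {n : ℕ} {C : Set (EuclideanSpace ℝ (Fin n))} (hconv : Convex ℝ C)
    (z p : EuclideanSpace ℝ (Fin n)) (hp : p ∈ C)
    (hmin : ∀ s ∈ C, ‖z - p‖ ≤ ‖z - s‖) :
    ∀ s ∈ C, ⟪z - p, s - p⟫ ≤ 0 := by
  intro s hs
  by_contra hcon
  push_neg at hcon
  set d := ⟪z - p, s - p⟫ with hd
  have hsp : s - p ≠ 0 := by
    intro h
    rw [hd, h] at hcon
    simp at hcon
  have hns : 0 < ‖s - p‖ ^ 2 := pow_pos (norm_pos_iff.mpr hsp) 2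
  set t := min 1 (d / ‖s - p‖ ^ 2) with ht
  have ht0 : 0 < t := lt_min one_pos (div_pos hcon hns)
  have ht1 : t ≤ 1 := min_le_left _ _
  have htd : t * ‖s - p‖ ^ 2 ≤ d := by
    have := min_le_right 1 (d / ‖s - p‖ ^ 2)
    calc t * ‖s - p‖ ^ 2 ≤ (d / ‖s - p‖ ^ 2) * ‖s - p‖ ^ 2 :=
          mul_le_mul_of_nonneg_right this (le_of_lt hns)
      _ = d := by field_simp
  have hq : p + t • (s - p) ∈ C := by
    have := hconv hp hs (by linarith : (0:ℝ) ≤ 1 - t) (le_of_lt ht0) (by ring)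
    convert this using 1
    module
  have hexp : ‖z - (p + t • (s - p))‖ ^ 2 = ‖z - p‖ ^ 2 - 2 * t * d + t ^ 2 * ‖s - p‖ ^ 2 := by
    have : z - (p + t • (s - p)) = (z - p) - t • (s - p) := by module
    rw [this, norm_sub_sq_real, real_inner_smul_right, norm_smul]
    simp [hd, mul_pow, abs_of_pos ht0]
    ring
  have hle := hmin _ hq
  have hle2 : ‖z - p‖ ^ 2 ≤ ‖z - (p + t • (s - p))‖ ^ 2 := by
    apply pow_le_pow_left₀ (norm_nonneg _) hle
  rw [hexp] at hle2
  nlinarith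


lemma quad_lower {n : ℕ} (Q : Matrix (Fin n) (Fin n) ℝ) (hQ : Q.PosSemidef) (lamPlus : ℝ)
    (hmin : ∀ μ : ℝ, 0 < μ →
      (∃ v : EuclideanSpace ℝ (Fin n), v ≠ 0 ∧ Matrix.toEuclideanLin Q v = μ • v) →
      lamPlus ≤ μ) :
    ∀ v ∈ LinearMap.range (Matrix.toEuclideanLin Q),
      lamPlus * ‖v‖ ^ 2 ≤ ⟪v, Matrix.toEuclideanLin Q v⟫ := by
  set T := Matrix.toEuclideanLin Q with hT
  have hH : Q.IsHermitian := hQ.1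
  have hsym : ∀ x y : EuclideanSpace ℝ (Fin n), ⟪T x, y⟫ = ⟪x, T y⟫ :=
    (Matrix.isHermitian_iff_isSymmetric.1 hH)
  set e := hH.eigenvectorBasis with he
  set μ := hH.eigenvalues with hμ
  have hTe : ∀ i, T (e i) = μ i • e i := by
    intro i
    ext j
    have := congrFun (hH.mulVec_eigenvectorBasis i) j
    simpa [hT, Matrix.toEuclideanLin_apply] using this
  have hrT : ∀ (v : EuclideanSpace ℝ (Fin n)) i, e.repr (T v) i = μ i * e.repr v i := by
    intro v i
    rw [OrthonormalBasis.repr_apply_apply, OrthonormalBasis.repr_apply_apply,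
      ← hsym, hTe, real_inner_smul_left]
  have hinner : ∀ x y : EuclideanSpace ℝ (Fin n), ⟪x, y⟫ = ∑ i, e.repr x i * e.repr y i := by
    intro x y
    rw [← e.repr.inner_map_map x y, PiLp.inner_apply]
    simp only [RCLike.inner_apply, starRingEnd_apply, star_trivial]
    exact Finset.sum_congr rfl fun i _ => mul_comm _ _
  rintro v ⟨w, rfl⟩
  have hnn : ∀ i, 0 ≤ μ i := hQ.eigenvalues_nonneg
  have key : ∀ i, lamPlus * (μ i * e.repr w i)^2 ≤ μ i * (μ i * e.repr w i)^2 := by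
    intro i
    rcases lt_or_eq_of_le (hnn i) with hpos | hzero
    · have : lamPlus ≤ μ i := hmin (μ i) hpos ⟨e i, e.orthonormal.ne_zero i, hTe i⟩
      nlinarith [sq_nonneg (μ i * e.repr w i)]
    · simp [← hzero]
  calc lamPlus * ‖T w‖ ^ 2 = ∑ i, lamPlus * (μ i * e.repr w i)^2 := by
        rw [← real_inner_self_eq_norm_sq, hinner, Finset.mul_sum]
        refine Finset.sum_congr rfl fun i _ => ?_
        rw [hrT]; ring
    _ ≤ ∑ i, μ i * (μ i * e.repr w i)^2 := Finset.sum_le_sum fun i _ => key i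
    _ = ⟪T w, T (T w)⟫ := by
        rw [hinner]
        refine (Finset.sum_congr rfl fun i _ => ?_).symm
        rw [hrT, hrT, hrT]; ring

lemma quad_nonneg {n : ℕ} (Q : Matrix (Fin n) (Fin n) ℝ) (hQ : Q.PosSemidef)
    (v : EuclideanSpace ℝ (Fin n)) : 0 ≤ ⟪v, Matrix.toEuclideanLin Q v⟫ := by
  have := hQ.dotProduct_mulVec_nonneg ((WithLp.equiv 2 _) v)
  simpa [EuclideanSpace.inner_eq_star_dotProduct, Matrix.toEuclideanLin_apply,
    dotProduct, star, mul_comm] using this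

set_option maxHeartbeats 2000000 in
/-- **Computable inexactness bound for QPPAL Phase II (Proposition 3.3).**
With `λ₊(Q) > 0` the smallest positive eigenvalue of `Q ≠ 0`, `Λ_k := Diag(τ_k Q, τ_k I_m, I_n)`
and `P_k := (Λ_k + σ_k T_l̃)⁻¹ Λ_k` the proximal map on `W × ℝᵐ × ℝⁿ`: given iterates
`(w^k, y^k, x^k)`, any `(w^{k+1}, y^{k+1}) ∈ W × ℝᵐ`, and
`x^{k+1} := Π_C(x^k + σ_k(−Qw^{k+1} + A*y^{k+1} − c))`, one has
`‖(w^{k+1}, y^{k+1}, x^{k+1}) − P_k(w^k, y^k, x^k)‖_{Λ_k}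
  ≤ (σ_k / min{1, √τ_k, √(τ_k λ₊(Q))}) ‖∇Ψ_k(w^{k+1}, y^{k+1})‖`. -/
theorem phase_II_inexactness_bound
    {n m : ℕ} (Q : Matrix (Fin n) (Fin n) ℝ) (hQ : Q.PosSemidef) (hQ_ne : Q ≠ 0)
    (A : Matrix (Fin m) (Fin n) ℝ)
    (b : EuclideanSpace ℝ (Fin m)) (c : EuclideanSpace ℝ (Fin n))
    (l u : Fin n → EReal) (hlu : ∀ i, l i ≤ u i)
    (C : Set (EuclideanSpace ℝ (Fin n))) (hC : C = boxSet l u) (hC_ne : C.Nonempty)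
    (projC : EuclideanSpace ℝ (Fin n) → EuclideanSpace ℝ (Fin n))
    (hproj : ∀ z, projC z ∈ C ∧ ∀ s ∈ C, ‖z - projC z‖ ≤ ‖z - s‖)
    -- `lamPlus` is the smallest positive eigenvalue of `Q`
    (lamPlus : ℝ) (hlam_pos : 0 < lamPlus)
    (hlam_eig : ∃ v : EuclideanSpace ℝ (Fin n), v ≠ 0 ∧
      Matrix.toEuclideanLin Q v = lamPlus • v)
    (hlam_min : ∀ μ : ℝ, 0 < μ →
      (∃ v : EuclideanSpace ℝ (Fin n), v ≠ 0 ∧ Matrix.toEuclideanLin Q v = μ • v) →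
      lamPlus ≤ μ)
    (τ σ : ℝ) (hτ : 0 < τ) (hσ : 0 < σ)
    (wk wk1 : EuclideanSpace ℝ (Fin n)) (yk yk1 : EuclideanSpace ℝ (Fin m))
    (xk xk1 : EuclideanSpace ℝ (Fin n))
    (hwk : wk ∈ LinearMap.range (Matrix.toEuclideanLin Q))
    (hwk1 : wk1 ∈ LinearMap.range (Matrix.toEuclideanLin Q))
    (hxk1 : xk1 = projC (xk + σ • (-(Matrix.toEuclideanLin Q wk1) +
      Matrix.toEuclideanLin Aᵀ yk1 - c))) :
    ∀ pstar : EuclideanSpace ℝ (Fin n) × EuclideanSpace ℝ (Fin m) × EuclideanSpace ℝ (Fin n),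
      pstar.1 ∈ LinearMap.range (Matrix.toEuclideanLin Q) →
      (∃ t ∈ TlOp Q A b c C pstar, LamOp Q τ (wk, yk, xk) = LamOp Q τ pstar + σ • t) →
      LamNorm Q τ ((wk1, yk1, xk1) - pstar) ≤
        (σ / min 1 (min (Real.sqrt τ) (Real.sqrt (τ * lamPlus)))) *
          Real.sqrt (‖(gradPsi Q A b c projC τ σ wk yk xk wk1 yk1).1‖ ^ 2 +
            ‖(gradPsi Q A b c projC τ σ wk yk xk wk1 yk1).2‖ ^ 2) := by
  rintro ⟨w', y', x'⟩ hw' ⟨t, ht, heq⟩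
  set T := Matrix.toEuclideanLin Q with hTdef
  set Bm := Matrix.toEuclideanLin A with hBdef
  set Bt := Matrix.toEuclideanLin Aᵀ with hBtdef
  obtain ⟨ht1, ht2, ζ, ⟨hx'C, hζ⟩, ht3⟩ := ht
  -- component equations from heq
  have h1 : τ • T wk = τ • T w' + σ • (T w' - T x') := by
    have := congrArg Prod.fst heq
    simp only [LamOp, Prod.fst_add, Prod.smul_fst] at this
    rw [this, ht1, map_sub]
  have h2 : τ • yk = τ • y' + σ • (Bm x' - b) := by
    have := congrArg (fun p => p.2.1) heq
    simp only [LamOp, Prod.snd_add, Prod.smul_snd, Prod.fst_add, Prod.smul_fst] at this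
    rw [this, ht2]
  have h3 : xk = x' + σ • (T w' - Bt y' + c + ζ) := by
    have := congrArg (fun p => p.2.2) heq
    simp only [LamOp, Prod.snd_add, Prod.smul_snd] at this
    rw [this, ht3]
  -- adjoint and symmetry
  have hadj : ∀ (x : EuclideanSpace ℝ (Fin n)) (y : EuclideanSpace ℝ (Fin m)),
      ⟪Bm x, y⟫ = ⟪x, Bt y⟫ := by
    intro x y
    have hBt : Bt = LinearMap.adjoint Bm := by
      rw [hBtdef, hBdef, ← Matrix.conjTranspose_eq_transpose_of_trivial,
        Matrix.toEuclideanLin_conjTranspose_eq_adjoint]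
    rw [hBt, LinearMap.adjoint_inner_right]
  have hsym : ∀ x y : EuclideanSpace ℝ (Fin n), ⟪T x, y⟫ = ⟪x, T y⟫ :=
    Matrix.isHermitian_iff_isSymmetric.1 hQ.1
  -- recover T wk and yk
  have hTwk : T wk = T w' + (σ / τ) • (T w' - T x') := by
    apply smul_right_injective (EuclideanSpace ℝ (Fin n)) hτ.ne'
    show τ • T wk = τ • (T w' + (σ / τ) • (T w' - T x'))
    rw [h1]; match_scalars <;> field_simp <;> ring
  have hyk : yk = y' + (σ / τ) • (Bm x' - b) := by
    apply smul_right_injective (EuclideanSpace ℝ (Fin m)) hτ.ne'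
    show τ • yk = τ • (y' + (σ / τ) • (Bm x' - b))
    rw [h2]; match_scalars <;> field_simp <;> ring
  -- the projection points
  set z1 : EuclideanSpace ℝ (Fin n) := xk - σ • (T wk1 - Bt yk1 + c) with hz1def
  set z2 : EuclideanSpace ℝ (Fin n) := xk - σ • (T w' - Bt y' + c) with hz2def
  have hxk1' : projC z1 = xk1 := by
    have harg : xk + σ • (-T wk1 + Bt yk1 - c) = z1 := by rw [hz1def]; module
    rw [hxk1, harg]
  have hxk1C : xk1 ∈ C := hxk1' ▸ (hproj z1).1
  have hconv : Convex ℝ C := hC ▸ boxSet_convex l u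
  -- variational inequality at z1
  have hvi : ∀ s ∈ C, ⟪z1 - xk1, s - xk1⟫ ≤ 0 := by
    have := proj_vi hconv z1 (projC z1) (hproj z1).1 (hproj z1).2
    rwa [hxk1'] at this
  set dw : EuclideanSpace ℝ (Fin n) := wk1 - w' with hdw
  set dy : EuclideanSpace ℝ (Fin m) := yk1 - y' with hdy
  set dx : EuclideanSpace ℝ (Fin n) := xk1 - x' with hdx
  -- firm nonexpansiveness
  have hz2x : z2 - x' = σ • ζ := by rw [hz2def, h3]; module
  have key1 : ⟪z1 - xk1, x' - xk1⟫ ≤ 0 := hvi x' hx'C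
  have key2 : ⟪z2 - x', dx⟫ ≤ 0 := by
    rw [hz2x, real_inner_smul_left]
    exact mul_nonpos_of_nonneg_of_nonpos hσ.le (hζ xk1 hxk1C)
  have firm : ‖dx‖ ^ 2 ≤ ⟪z1 - z2, dx⟫ := by
    have hsplit : z1 - z2 = (z1 - xk1) + dx - (z2 - x') := by rw [hdx]; module
    have hneg : ⟪z1 - xk1, dx⟫ = -⟪z1 - xk1, x' - xk1⟫ := by
      rw [← inner_neg_right]; congr 1; rw [hdx]; module
    rw [hsplit, inner_sub_left, inner_add_left, real_inner_self_eq_norm_sq]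
    linarith [key1, key2, hneg.symm ▸ (neg_nonneg.2 key1)]
  have hz12 : z1 - z2 = σ • Bt dy - σ • T dw := by
    rw [hz1def, hz2def, hdy, hdw, map_sub, map_sub]; module
  have hfirm2 : ‖dx‖ ^ 2 ≤ σ * ⟪dx, Bt dy⟫ - σ * ⟪dx, T dw⟫ := by
    have : ⟪z1 - z2, dx⟫ = σ * ⟪dx, Bt dy⟫ - σ * ⟪dx, T dw⟫ := by
      rw [hz12, inner_sub_left, real_inner_smul_left, real_inner_smul_left,
        real_inner_comm (Bt dy) dx, real_inner_comm (T dw) dx]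
    linarith [firm, this.symm.le]
  -- the gradient components
  set g1 : EuclideanSpace ℝ (Fin n) := (gradPsi Q A b c projC τ σ wk yk xk wk1 yk1).1 with hg1
  set g2 : EuclideanSpace ℝ (Fin m) := (gradPsi Q A b c projC τ σ wk yk xk wk1 yk1).2 with hg2
  have hg1' : g1 = T wk1 - T xk1 + (τ / σ) • (T wk1 - T wk) := by
    rw [hg1]
    show T wk1 - T (projC z1) + (τ / σ) • T (wk1 - wk) = _
    rw [hxk1', map_sub]
  have hg2' : g2 = -b + Bm xk1 + (τ / σ) • (yk1 - yk) := by
    rw [hg2]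
    show -b + Bm (projC z1) + (τ / σ) • (yk1 - yk) = _
    rw [hxk1']
  have hσ0 : σ ≠ 0 := hσ.ne'
  have hτ0 : τ ≠ 0 := hτ.ne'
  have hσg1 : σ • g1 = σ • T dw + τ • T dw - σ • T dx := by
    rw [hg1', hTwk, hdw, hdx, map_sub, map_sub]
    match_scalars <;> field_simp <;> ring
  have hσg2 : σ • g2 = σ • Bm dx + τ • dy := by
    rw [hg2', hyk, hdx, hdy, map_sub]
    match_scalars <;> field_simp
    all_goals try ring
    all_goals tauto
  -- the main strong monotonicity inequality
  have hquad : 0 ≤ ⟪dw, T dw⟫ := quad_nonneg Q hQ dw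
  have hmain : τ * ⟪dw, T dw⟫ + τ * ‖dy‖ ^ 2 + ‖dx‖ ^ 2 ≤
      σ * (⟪g1, dw⟫ + ⟪g2, dy⟫) := by
    have e1 : σ * ⟪g1, dw⟫ = σ * ⟪T dw, dw⟫ + τ * ⟪T dw, dw⟫ - σ * ⟪T dx, dw⟫ := by
      rw [← real_inner_smul_left, hσg1, inner_sub_left, inner_add_left,
        real_inner_smul_left, real_inner_smul_left, real_inner_smul_left]
    have e2 : σ * ⟪g2, dy⟫ = σ * ⟪Bm dx, dy⟫ + τ * ⟪dy, dy⟫ := by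
      rw [← real_inner_smul_left, hσg2, inner_add_left,
        real_inner_smul_left, real_inner_smul_left]
    have e3 : ⟪T dx, dw⟫ = ⟪dx, T dw⟫ := hsym dx dw
    have e4 : ⟪Bm dx, dy⟫ = ⟪dx, Bt dy⟫ := hadj dx dy
    have e5 : ⟪T dw, dw⟫ = ⟪dw, T dw⟫ := real_inner_comm _ _
    have e6 : ⟪dy, dy⟫ = ‖dy‖ ^ 2 := real_inner_self_eq_norm_sq dy
    have expand : σ * (⟪g1, dw⟫ + ⟪g2, dy⟫) =
        σ * ⟪dw, T dw⟫ + τ * ⟪dw, T dw⟫ + τ * ‖dy‖ ^ 2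
          + (σ * ⟪dx, Bt dy⟫ - σ * ⟪dx, T dw⟫) := by
      rw [mul_add, e1, e2, e3, e4, e5, e6]; ring
    rw [expand]
    nlinarith [hfirm2, hquad, hσ]
  -- lambda-plus bound
  have hdwmem : dw ∈ LinearMap.range T := by
    rw [hdw]; exact Submodule.sub_mem _ hwk1 hw'
  have hlamb : lamPlus * ‖dw‖ ^ 2 ≤ ⟪dw, T dw⟫ := quad_lower Q hQ lamPlus hlam_min dw hdwmem
  -- assemble
  set K := min 1 (min (Real.sqrt τ) (Real.sqrt (τ * lamPlus))) with hK
  have hKpos : 0 < K := by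
    apply lt_min one_pos
    exact lt_min (Real.sqrt_pos.2 hτ) (Real.sqrt_pos.2 (by positivity))
  have hKτ : K ^ 2 ≤ τ := by
    have h := (min_le_right 1 _).trans (min_le_left (Real.sqrt τ) (Real.sqrt (τ * lamPlus)))
    calc K ^ 2 ≤ Real.sqrt τ ^ 2 := pow_le_pow_left₀ hKpos.le h 2
      _ = τ := Real.sq_sqrt hτ.le
  have hKtl : K ^ 2 ≤ τ * lamPlus := by
    have h := (min_le_right 1 _).trans (min_le_right (Real.sqrt τ) (Real.sqrt (τ * lamPlus)))
    calc K ^ 2 ≤ Real.sqrt (τ * lamPlus) ^ 2 := pow_le_pow_left₀ hKpos.le h 2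
      _ = τ * lamPlus := Real.sq_sqrt (by positivity)
  set G := Real.sqrt (‖g1‖ ^ 2 + ‖g2‖ ^ 2) with hG
  set S := τ * ⟪dw, T dw⟫ + τ * ‖dy‖ ^ 2 + ‖dx‖ ^ 2 with hS
  have hSnn : 0 ≤ S := by
    have : 0 ≤ τ * ⟪dw, T dw⟫ := mul_nonneg hτ.le hquad
    positivity
  set N := Real.sqrt S with hN
  have hLHS : LamNorm Q τ ((wk1, yk1, xk1) - (w', y', x')) = N := by
    rw [LamNorm, hN, hS]
    congr 2
  have hN2 : N ^ 2 = S := Real.sq_sqrt hSnn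
  have hGnn : 0 ≤ G := Real.sqrt_nonneg _
  have hNnn : 0 ≤ N := Real.sqrt_nonneg _
  set D := Real.sqrt (‖dw‖ ^ 2 + ‖dy‖ ^ 2) with hD
  have hDnn : 0 ≤ D := Real.sqrt_nonneg _
  -- Cauchy-Schwarz in the product
  have hCS : ⟪g1, dw⟫ + ⟪g2, dy⟫ ≤ G * D := by
    have c1 : ⟪g1, dw⟫ ≤ ‖g1‖ * ‖dw‖ := real_inner_le_norm g1 dw
    have c2 : ⟪g2, dy⟫ ≤ ‖g2‖ * ‖dy‖ := real_inner_le_norm g2 dy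
    have c3 : ‖g1‖ * ‖dw‖ + ‖g2‖ * ‖dy‖ ≤ G * D := by
      have hsq : (‖g1‖ * ‖dw‖ + ‖g2‖ * ‖dy‖) ^ 2 ≤
          (‖g1‖ ^ 2 + ‖g2‖ ^ 2) * (‖dw‖ ^ 2 + ‖dy‖ ^ 2) := by
        nlinarith [sq_nonneg (‖g1‖ * ‖dy‖ - ‖g2‖ * ‖dw‖)]
      have hGD : G * D = Real.sqrt ((‖g1‖ ^ 2 + ‖g2‖ ^ 2) * (‖dw‖ ^ 2 + ‖dy‖ ^ 2)) := by
        rw [hG, hD, ← Real.sqrt_mul (by positivity)]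
      rw [hGD]
      exact (Real.le_sqrt (by positivity) (by positivity)).2 hsq
    linarith
  -- K * D ≤ N
  have hKD : K * D ≤ N := by
    have hD2 : D ^ 2 = ‖dw‖ ^ 2 + ‖dy‖ ^ 2 := Real.sq_sqrt (by positivity)
    have b1 : K ^ 2 * ‖dw‖ ^ 2 ≤ τ * ⟪dw, T dw⟫ := by
      calc K ^ 2 * ‖dw‖ ^ 2 ≤ (τ * lamPlus) * ‖dw‖ ^ 2 :=
            mul_le_mul_of_nonneg_right hKtl (sq_nonneg _)
        _ = τ * (lamPlus * ‖dw‖ ^ 2) := by ring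
        _ ≤ τ * ⟪dw, T dw⟫ := mul_le_mul_of_nonneg_left hlamb hτ.le
    have b2 : K ^ 2 * ‖dy‖ ^ 2 ≤ τ * ‖dy‖ ^ 2 :=
      mul_le_mul_of_nonneg_right hKτ (sq_nonneg _)
    have hsq : (K * D) ^ 2 ≤ S := by
      have hx2 : (0:ℝ) ≤ ‖dx‖ ^ 2 := sq_nonneg _
      have : (K * D) ^ 2 = K ^ 2 * ‖dw‖ ^ 2 + K ^ 2 * ‖dy‖ ^ 2 := by
        rw [mul_pow, hD2]; ring
      rw [this, hS]
      linarith
    calc K * D = Real.sqrt ((K * D) ^ 2) := (Real.sqrt_sq (by positivity)).symm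
      _ ≤ Real.sqrt S := Real.sqrt_le_sqrt hsq
  -- final computation
  have hfinal : N ≤ σ / K * G := by
    rcases eq_or_lt_of_le hNnn with h0 | h0
    · rw [← h0]; positivity
    · have step1 : N ^ 2 ≤ σ * (G * D) := by
        rw [hN2]
        calc S ≤ σ * (⟪g1, dw⟫ + ⟪g2, dy⟫) := hmain
          _ ≤ σ * (G * D) := mul_le_mul_of_nonneg_left hCS hσ.le
      have step2 : K * N ^ 2 ≤ σ * G * N := by
        calc K * N ^ 2 ≤ K * (σ * (G * D)) := mul_le_mul_of_nonneg_left step1 hKpos.le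
          _ = σ * G * (K * D) := by ring
          _ ≤ σ * G * N := mul_le_mul_of_nonneg_left hKD (by positivity)
      have step3 : K * N ≤ σ * G := by
        have h' : (K * N) * N ≤ (σ * G) * N := by
          calc (K * N) * N = K * N ^ 2 := by ring
            _ ≤ σ * G * N := step2
        exact le_of_mul_le_mul_right h' h0
      rw [div_mul_eq_mul_div, le_div_iff₀ hKpos]
      linarith [step3]
  calc LamNorm Q τ ((wk1, yk1, xk1) - (w', y', x')) = N := hLHS
    _ ≤ σ / K * G := hfinal
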